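/- (Equivalence of the minimal time and minimal norm problems.) Assume y₀ ≠ 0 and hypotheses (EC), (BB), (ET). Let M > 0 and T > 0. If u* is an optimal control to (TOCP)_M, then its restriction to (0,T_M) is an optimal control to (NOCP)_{T_M}; and if v* is an optimal control to (NOCP)_T, then its extension by zero outside (0,T) is an optimal control to (TOCP)_{M_T}. -/

import Mathlib

open MeasureTheory Set Filter Topology

noncomputable section

variable {H : Type*} [NormedAddCommGroup H] [InnerProductSpace ℂ H] [CompleteSpace H]
  [SecondCountableTopology H]

/-- `U` is a strongly continuous one-parameter group of unitary operators on `H`,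
abstracting the Schrödinger group `e^{-iΔt}`. -/
def IsUnitaryGroup (U : ℝ → H →L[ℂ] H) : Prop :=
  U 0 = ContinuousLinearMap.id ℂ H ∧
  (∀ s t : ℝ, U (s + t) = (U s).comp (U t)) ∧
  (∀ (t : ℝ) (x : H), ‖U t x‖ = ‖x‖) ∧
  ∀ x : H, Continuous fun t : ℝ => U t x

/-- `B` is a nonzero orthogonal projection on `H`, abstracting multiplication by `χ_ω`. -/
def IsOrthProj (B : H →L[ℂ] H) : Prop :=
  B ≠ 0 ∧ B.comp B = B ∧ ∀ x y : H, (inner ℂ (B x) y : ℂ) = inner ℂ x (B y)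

/-- Membership in `L∞((a,b);H)`. -/
def MemLinfty (u : ℝ → H) (a b : ℝ) : Prop :=
  AEStronglyMeasurable u (volume : Measure ℝ) ∧
    ∃ c : ℝ, ∀ᵐ t : ℝ ∂volume, t ∈ Ioo a b → ‖u t‖ ≤ c

/-- Membership in `L∞((0,∞);H)`. -/
def MemLinftyInf (u : ℝ → H) : Prop :=
  AEStronglyMeasurable u (volume : Measure ℝ) ∧
    ∃ c : ℝ, ∀ᵐ t : ℝ ∂volume, t ∈ Ioi (0 : ℝ) → ‖u t‖ ≤ c

/-- The `L∞((a,b);H)` norm of `u`. -/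
def supNorm (u : ℝ → H) (a b : ℝ) : ℝ :=
  sInf {c : ℝ | 0 ≤ c ∧ ∀ᵐ t : ℝ ∂volume, t ∈ Ioo a b → ‖u t‖ ≤ c}

/-- `stateT U B T τ u y₀ = y(T; χ_{(τ,T)}u, y₀)`, the mild solution at time `T` of the
controlled Schrödinger equation with initial state `y₀`, the control acting on `(τ,T)`:
`y(T) = U(T)y₀ + ∫_τ^T U(T-s) B u(s) ds`.  The free state at time `t` starting from `y₀`
with control `u` active from time `0` is `stateT U B t 0 u y₀`. -/
def stateT (U : ℝ → H →L[ℂ] H) (B : H →L[ℂ] H) (T τ : ℝ) (u : ℝ → H) (y₀ : H) : H :=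
  U T y₀ + ∫ s in Ioo τ T, U (T - s) (B (u s))

/-- Hypothesis (EC): `L∞`-exact controllability with cost. -/
def EC (U : ℝ → H →L[ℂ] H) (B : H →L[ℂ] H) : Prop :=
  ∀ τ : ℝ, 0 < τ → ∃ C : ℝ, 0 < C ∧ ∀ y₀ z : H, ∃ u : ℝ → H,
    AEStronglyMeasurable u (volume : Measure ℝ) ∧
    (∀ᵐ t : ℝ ∂volume, t ∈ Ioo 0 τ → ‖u t‖ ≤ C * ‖z - U τ y₀‖) ∧
    stateT U B τ 0 u y₀ = z

/-- Hypothesis (UC): unique continuation. -/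
def UC (U : ℝ → H →L[ℂ] H) (B : H →L[ℂ] H) : Prop :=
  ∀ η : H, η ≠ 0 → volume {t : ℝ | B (U t η) = 0} = 0

/-- The admissible set `U_M` of the minimal time problem `(TOCP)_M`. -/
def UMset (U : ℝ → H →L[ℂ] H) (B : H →L[ℂ] H) (y₀ : H) (M : ℝ) : Set (ℝ → H) :=
  {u | MemLinftyInf u ∧ (∀ᵐ t : ℝ ∂volume, t ∈ Ioi (0 : ℝ) → ‖u t‖ ≤ M) ∧
    ∃ s : ℝ, 0 < s ∧ stateT U B s 0 u y₀ = 0}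

/-- The minimal time `T_M` of `(TOCP)_M`. -/
def Tmin (U : ℝ → H →L[ℂ] H) (B : H →L[ℂ] H) (y₀ : H) (M : ℝ) : ℝ :=
  sInf {s : ℝ | 0 < s ∧ ∃ u ∈ UMset U B y₀ M, stateT U B s 0 u y₀ = 0}

/-- The admissible set `V_T` of the minimal norm problem `(NOCP)_T`. -/
def VTset (U : ℝ → H →L[ℂ] H) (B : H →L[ℂ] H) (y₀ : H) (T : ℝ) : Set (ℝ → H) :=
  {v | MemLinfty v 0 T ∧ stateT U B T 0 v y₀ = 0}

/-- The minimal norm `M_T` of `(NOCP)_T`. -/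
def Mmin (U : ℝ → H →L[ℂ] H) (B : H →L[ℂ] H) (y₀ : H) (T : ℝ) : ℝ :=
  sInf ((fun v : ℝ → H => supNorm v 0 T) '' VTset U B y₀ T)

/-- Hypothesis (BB): bang-bang property of the minimal time problems. -/
def BB (U : ℝ → H →L[ℂ] H) (B : H →L[ℂ] H) : Prop :=
  ∀ y₀ : H, y₀ ≠ 0 → ∀ M : ℝ, 0 < M → ∀ u ∈ UMset U B y₀ M,
    stateT U B (Tmin U B y₀ M) 0 u y₀ = 0 →
    ∀ᵐ t : ℝ ∂volume, t ∈ Ioo 0 (Tmin U B y₀ M) → ‖u t‖ = M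

/-- Hypothesis (ET): existence of optimal controls for the minimal time problems. -/
def ET (U : ℝ → H →L[ℂ] H) (B : H →L[ℂ] H) : Prop :=
  ∀ y₀ : H, y₀ ≠ 0 → ∀ M : ℝ, 0 < M →
    ∃ u ∈ UMset U B y₀ M, stateT U B (Tmin U B y₀ M) 0 u y₀ = 0

/-- The admissible set `U_{M,τ}`. -/
def UadmSet (M τ T : ℝ) : Set (ℝ → H) :=
  {u | MemLinfty u 0 T ∧ ∀ᵐ t : ℝ ∂volume, t ∈ Ioo τ T → ‖u t‖ ≤ M}

/-- The optimal distance `r(M,τ)` of the optimal target problem `(OP)^{M,τ}`. -/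
def rOP (U : ℝ → H →L[ℂ] H) (B : H →L[ℂ] H) (y₀ z_d : H) (T M τ : ℝ) : ℝ :=
  sInf ((fun u : ℝ → H => ‖stateT U B T τ u y₀ - z_d‖) '' UadmSet M τ T)

/-- `u` is an optimal control to `(OP)^{M,τ}`. -/
def IsOptOP (U : ℝ → H →L[ℂ] H) (B : H →L[ℂ] H) (y₀ z_d : H) (T M τ : ℝ) (u : ℝ → H) :
    Prop :=
  u ∈ UadmSet M τ T ∧ ‖stateT U B T τ u y₀ - z_d‖ = rOP U B y₀ z_d T M τ

/-- `M^τ`, the minimal norm for exact steering to the target `z_d`. -/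
def Mtau (U : ℝ → H →L[ℂ] H) (B : H →L[ℂ] H) (y₀ z_d : H) (T τ : ℝ) : ℝ :=
  sInf ((fun u : ℝ → H => supNorm u τ T) ''
    {u : ℝ → H | MemLinfty u 0 T ∧ stateT U B T τ u y₀ = z_d})

/-- The admissible set `W_{τ,r}` of the optimal norm problem `(NP)^{τ,r}`. -/
def WadmSet (U : ℝ → H →L[ℂ] H) (B : H →L[ℂ] H) (y₀ z_d : H) (T τ r : ℝ) :
    Set (ℝ → H) :=
  {u | MemLinfty u 0 T ∧ ‖stateT U B T τ u y₀ - z_d‖ ≤ r}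

/-- The optimal norm `M(τ,r)` of `(NP)^{τ,r}`. -/
def MNP (U : ℝ → H →L[ℂ] H) (B : H →L[ℂ] H) (y₀ z_d : H) (T τ r : ℝ) : ℝ :=
  sInf ((fun u : ℝ → H => supNorm u τ T) '' WadmSet U B y₀ z_d T τ r)

/-- `u` is an optimal control to `(NP)^{τ,r}`. -/
def IsOptNP (U : ℝ → H →L[ℂ] H) (B : H →L[ℂ] H) (y₀ z_d : H) (T τ r : ℝ) (u : ℝ → H) :
    Prop :=
  u ∈ WadmSet U B y₀ z_d T τ r ∧ supNorm u τ T = MNP U B y₀ z_d T τ r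

/-- The admissible set `V_{M,r}` of the second type optimal time problem `(TP)^{M,r}`. -/
def VadmSet (U : ℝ → H →L[ℂ] H) (B : H →L[ℂ] H) (y₀ z_d : H) (T M r : ℝ) :
    Set (ℝ → H) :=
  {u | ∃ τ : ℝ, τ ∈ Ico (0 : ℝ) T ∧ u ∈ UadmSet M τ T ∧
    ‖stateT U B T τ u y₀ - z_d‖ ≤ r}

/-- `τ_{M,r}(u)`. -/
def tauOf (U : ℝ → H →L[ℂ] H) (B : H →L[ℂ] H) (y₀ z_d : H) (T r : ℝ) (u : ℝ → H) : ℝ :=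
  sSup {τ : ℝ | τ ∈ Ico (0 : ℝ) T ∧ ‖stateT U B T τ u y₀ - z_d‖ ≤ r}

/-- The optimal time `τ(M,r)` of `(TP)^{M,r}`. -/
def tauTP (U : ℝ → H →L[ℂ] H) (B : H →L[ℂ] H) (y₀ z_d : H) (T M r : ℝ) : ℝ :=
  sSup (tauOf U B y₀ z_d T r '' VadmSet U B y₀ z_d T M r)

/-- `u` is an optimal control to `(TP)^{M,r}`. -/
def IsOptTP (U : ℝ → H →L[ℂ] H) (B : H →L[ℂ] H) (y₀ z_d : H) (T M r : ℝ) (u : ℝ → H) :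
    Prop :=
  u ∈ VadmSet U B y₀ z_d T M r ∧
    ‖stateT U B T (tauTP U B y₀ z_d T M r) u y₀ - z_d‖ ≤ r

/-- The adjoint state `φ*(t) = U(t-T)(z_d - y(T; χ_{(τ,T)}u, y₀))`. -/
def adjState (U : ℝ → H →L[ℂ] H) (B : H →L[ℂ] H) (y₀ z_d : H) (T τ : ℝ) (u : ℝ → H)
    (t : ℝ) : H :=
  U (t - T) (z_d - stateT U B T τ u y₀)

/-!
Both halves compare the two optimal values by contradiction: with the controllability (EC)
and the flow property of the mild solution, a strict improvement of one problem yields a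
strict improvement of the other. By (BB) an optimal control of `(TOCP)_M` has norm exactly
`M` on `(0, T_M)`, and a control of smaller norm reaching `0` at `T_M` would produce one of
norm `≤ M` reaching `0` earlier; hence `M_{T_M} = M`. Conversely, if the minimal time `T'`
for the bound `M_T` were `< T`, an optimal control for it (which exists by (ET)) could be
turned into a control on `(0, T)` of norm `< M_T`; hence `T_{M_T} = T`.
-/

theorem setIntegral_Ioo_eq_intervalIntegral {F : Type*} [NormedAddCommGroup F]
    [NormedSpace ℝ F] {f : ℝ → F} {a b : ℝ} (hab : a ≤ b) :
    ∫ s in Ioo a b, f s = ∫ s in a..b, f s := by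
  rw [intervalIntegral.integral_of_le hab, integral_Ioc_eq_integral_Ioo]

variable {E : Type*} [NormedAddCommGroup E]

theorem ae_norm_indicator_le {f : ℝ → E} {s t : Set ℝ} {M : ℝ} (hM : 0 ≤ M)
    (h : ∀ᵐ x : ℝ, x ∈ s → ‖f x‖ ≤ M) : ∀ᵐ x : ℝ, x ∈ t → ‖s.indicator f x‖ ≤ M := by
  refine h.mono fun x hx _ => ?_
  by_cases hxs : x ∈ s
  · rw [indicator_of_mem hxs]; exact hx hxs
  · rw [indicator_of_notMem hxs, norm_zero]; exact hM

theorem MemLinfty.mono {u : ℝ → E} {a b c d : ℝ} (hu : MemLinfty u a b)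
    (h : Ioo c d ⊆ Ioo a b) : MemLinfty u c d :=
  ⟨hu.1, hu.2.imp fun _ hC => hC.mono fun _ ht hcd => ht (h hcd)⟩

theorem MemLinfty.indicator_Ioo {u : ℝ → E} {a b : ℝ} (hu : MemLinfty u a b) (c d : ℝ) :
    MemLinfty ((Ioo a b).indicator u) c d := by
  obtain ⟨hm, C, hC⟩ := hu
  exact ⟨hm.indicator measurableSet_Ioo, max C 0, ae_norm_indicator_le (le_max_right C 0)
    (hC.mono fun t ht hab => (ht hab).trans (le_max_left C 0))⟩

theorem supNorm_nonneg (u : ℝ → E) (a b : ℝ) : 0 ≤ supNorm u a b :=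
  Real.sInf_nonneg fun _ hc => hc.1

theorem supNorm_le {u : ℝ → E} {a b c : ℝ} (hc : 0 ≤ c)
    (h : ∀ᵐ t : ℝ, t ∈ Ioo a b → ‖u t‖ ≤ c) : supNorm u a b ≤ c :=
  csInf_le ⟨0, fun _ hx => hx.1⟩ ⟨hc, h⟩

theorem ae_norm_le_supNorm {u : ℝ → E} {a b : ℝ} (hu : MemLinfty u a b) :
    ∀ᵐ t : ℝ, t ∈ Ioo a b → ‖u t‖ ≤ supNorm u a b := by
  obtain ⟨-, C, hC⟩ := hu
  obtain ⟨c, -, hlim, hcS⟩ := exists_seq_tendsto_sInf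
    (S := {c : ℝ | 0 ≤ c ∧ ∀ᵐ t : ℝ, t ∈ Ioo a b → ‖u t‖ ≤ c})
    ⟨max C 0, le_max_right C 0, hC.mono fun t ht hab => (ht hab).trans (le_max_left C 0)⟩
    ⟨0, fun _ hx => hx.1⟩
  filter_upwards [ae_all_iff.2 fun n => (hcS n).2] with t ht hab
  exact ge_of_tendsto' hlim fun n => ht n hab

theorem supNorm_eq_of_ae_norm_eq {u : ℝ → E} {a b M : ℝ} (hab : a < b) (hM : 0 ≤ M)
    (h : ∀ᵐ t : ℝ, t ∈ Ioo a b → ‖u t‖ = M) : supNorm u a b = M := by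
  have hle : ∀ᵐ t : ℝ, t ∈ Ioo a b → ‖u t‖ ≤ M := h.mono fun t ht hab => (ht hab).le
  refine le_antisymm (supNorm_le hM hle) (le_csInf ⟨M, hM, hle⟩ fun c ⟨_, hc⟩ => ?_)
  obtain ⟨t, -, hMt, hct⟩ := Measure.exists_mem_of_measure_ne_zero_of_ae
    (by simpa using hab : volume (Ioo a b) ≠ 0)
    (p := fun t => ‖u t‖ = M ∧ ‖u t‖ ≤ c)
    ((ae_restrict_iff' measurableSet_Ioo).2 ((h.and hc).mono fun t ht hab => ⟨ht.1 hab, ht.2 hab⟩))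
  exact hMt ▸ hct

variable [InnerProductSpace ℂ E]

namespace IsUnitaryGroup

variable {U : ℝ → E →L[ℂ] E}

theorem apply_zero (hU : IsUnitaryGroup U) (x : E) : U 0 x = x := by
  rw [hU.1]; rfl

theorem apply_add (hU : IsUnitaryGroup U) (s t : ℝ) (x : E) : U (s + t) x = U s (U t x) := by
  rw [hU.2.1]; rfl

theorem norm_apply (hU : IsUnitaryGroup U) (t : ℝ) (x : E) : ‖U t x‖ = ‖x‖ :=
  hU.2.2.1 t x

theorem apply_apply_neg (hU : IsUnitaryGroup U) (t : ℝ) (x : E) : U t (U (-t) x) = x := by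
  rw [← hU.apply_add, add_neg_cancel, hU.apply_zero]

/-- Strong continuity upgrades to joint continuity because every `U t` is an isometry:
`‖U t x - U t₀ x₀‖ ≤ ‖x - x₀‖ + ‖U t x₀ - U t₀ x₀‖`. -/
theorem continuous_uncurry (hU : IsUnitaryGroup U) : Continuous fun p : ℝ × E => U p.1 p.2 := by
  refine continuous_iff_continuousAt.2 fun ⟨t₀, x₀⟩ => ?_
  rw [ContinuousAt, tendsto_iff_norm_sub_tendsto_zero]
  have hbound (p : ℝ × E) : ‖U p.1 p.2 - U t₀ x₀‖ ≤ ‖p.2 - x₀‖ + ‖U p.1 x₀ - U t₀ x₀‖ := by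
    calc ‖U p.1 p.2 - U t₀ x₀‖ = ‖U p.1 (p.2 - x₀) + (U p.1 x₀ - U t₀ x₀)‖ := by
          rw [map_sub, sub_add_sub_cancel]
      _ ≤ _ := by rw [← hU.norm_apply p.1 (p.2 - x₀)]; exact norm_add_le _ _
  have hcont : Continuous fun p : ℝ × E => ‖p.2 - x₀‖ + ‖U p.1 x₀ - U t₀ x₀‖ :=
    (continuous_snd.sub continuous_const).norm.add
      (((hU.2.2.2 x₀).comp continuous_fst).sub continuous_const).norm
  exact squeeze_zero (fun _ => norm_nonneg _) hbound (by simpa using hcont.tendsto (t₀, x₀))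

end IsUnitaryGroup

theorem IsOrthProj.norm_apply_le {B : E →L[ℂ] E} (hB : IsOrthProj B) (x : E) :
    ‖B x‖ ≤ ‖x‖ := by
  rcases (norm_nonneg (B x)).eq_or_lt with h0 | h0
  · rw [← h0]; exact norm_nonneg x
  have hBB : B (B x) = B x := congrArg (fun L : E →L[ℂ] E => L x) hB.2.1
  have hsq : ‖B x‖ * ‖B x‖ = RCLike.re (inner ℂ x (B x)) := by
    rw [← inner_self_eq_norm_mul_norm (𝕜 := ℂ), hB.2.2, hBB]
  refine le_of_mul_le_mul_right ?_ h0
  rw [hsq]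
  exact (RCLike.re_le_norm _).trans (norm_inner_le_norm x (B x))

section State

variable {U : ℝ → E →L[ℂ] E} {B : E →L[ℂ] E}

theorem aestronglyMeasurable_kernel (hU : IsUnitaryGroup U) {u : ℝ → E}
    (hu : AEStronglyMeasurable u) (T : ℝ) :
    AEStronglyMeasurable fun s => U (T - s) (B (u s)) :=
  hU.continuous_uncurry.comp_aestronglyMeasurable
    ((continuous_const.sub continuous_id).aestronglyMeasurable.prodMk
      (B.continuous.comp_aestronglyMeasurable hu))

theorem ae_norm_kernel_le (hU : IsUnitaryGroup U) (hB : IsOrthProj B) {u : ℝ → E}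
    {s : Set ℝ} {c : ℝ} (hc : ∀ᵐ t : ℝ, t ∈ s → ‖u t‖ ≤ c) (T : ℝ) :
    ∀ᵐ t : ℝ, t ∈ s → ‖U (T - t) (B (u t))‖ ≤ c :=
  hc.mono fun _ ht hts => (hU.norm_apply _ _).trans_le ((hB.norm_apply_le _).trans (ht hts))

theorem integrableOn_kernel (hU : IsUnitaryGroup U) (hB : IsOrthProj B) {u : ℝ → E}
    {a b : ℝ} (hu : MemLinfty u a b) (T : ℝ) :
    IntegrableOn (fun s => U (T - s) (B (u s))) (Ioo a b) := by
  obtain ⟨hm, c, hc⟩ := hu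
  exact Measure.integrableOn_of_bounded measure_Ioo_lt_top.ne
    (aestronglyMeasurable_kernel hU hm T)
    ((ae_restrict_iff' measurableSet_Ioo).2 (ae_norm_kernel_le hU hB hc T))

theorem norm_stateT_sub_le (hU : IsUnitaryGroup U) (hB : IsOrthProj B) {u : ℝ → E}
    {T c : ℝ} (hT : 0 ≤ T) (hc : ∀ᵐ t : ℝ, t ∈ Ioo 0 T → ‖u t‖ ≤ c) (y : E) :
    ‖stateT U B T 0 u y - U T y‖ ≤ c * T := by
  rw [stateT, add_sub_cancel_left]
  simpa [Real.volume_real_Ioo_of_le hT] using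
    norm_setIntegral_le_of_norm_le_const_ae' measure_Ioo_lt_top (ae_norm_kernel_le hU hB hc T)

theorem stateT_congr {u v : ℝ → E} {T τ : ℝ} (h : EqOn u v (Ioo τ T)) (y : E) :
    stateT U B T τ u y = stateT U B T τ v y := by
  unfold stateT
  rw [setIntegral_congr_fun measurableSet_Ioo fun s hs => by rw [h hs]]

theorem stateT_indicator (u : ℝ → E) (T τ : ℝ) (y : E) :
    stateT U B T τ ((Ioo τ T).indicator u) y = stateT U B T τ u y :=
  stateT_congr (fun _ hs => indicator_of_mem hs u) y

theorem stateT_zero (T τ : ℝ) (y : E) : stateT U B T τ 0 y = U T y := by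
  simp [stateT]

theorem stateT_add (hU : IsUnitaryGroup U) (hB : IsOrthProj B) {u v : ℝ → E} {T τ : ℝ}
    (hu : MemLinfty u τ T) (hv : MemLinfty v τ T) (y z : E) :
    stateT U B T τ (u + v) (y + z) = stateT U B T τ u y + stateT U B T τ v z := by
  simp only [stateT, Pi.add_apply, map_add]
  rw [integral_add (integrableOn_kernel hU hB hu T) (integrableOn_kernel hU hB hv T)]
  abel

theorem stateT_smul (c : ℂ) (u : ℝ → E) (T τ : ℝ) (y : E) :
    stateT U B T τ (c • u) (c • y) = c • stateT U B T τ u y := by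
  simp [stateT, integral_smul, smul_add]

theorem pos_of_stateT_eq_zero (hU : IsUnitaryGroup U) {u : ℝ → E} {T : ℝ} {y : E}
    (hy : y ≠ 0) (h : stateT U B T 0 u y = 0) : 0 < T := by
  by_contra hT
  rw [stateT, Ioo_eq_empty (not_lt.2 (not_lt.1 hT)), Measure.restrict_empty, integral_zero_measure,
    add_zero] at h
  exact hy (norm_eq_zero.1 (by rw [← hU.norm_apply T, h, norm_zero]))

theorem stateT_eq_stateT_comp_add [CompleteSpace E] (hU : IsUnitaryGroup U)
    (hB : IsOrthProj B) {u : ℝ → E} {a T : ℝ} (hu : MemLinfty u 0 T) (ha : 0 ≤ a) (haT : a ≤ T)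
    (y : E) :
    stateT U B T 0 u y = stateT U B (T - a) 0 (fun s => u (s + a)) (stateT U B a 0 u y) := by
  have hK := integrableOn_kernel hU hB hu T
  have hpull : U (T - a) (∫ s in Ioo 0 a, U (a - s) (B (u s)))
      = ∫ s in Ioo 0 a, U (T - s) (B (u s)) := by
    rw [← ContinuousLinearMap.integral_comp_comm _
      (integrableOn_kernel hU hB (hu.mono (Ioo_subset_Ioo_right haT)) a)]
    refine setIntegral_congr_fun measurableSet_Ioo fun s _ => ?_
    simp only [← hU.apply_add, sub_add_sub_cancel]
  have hshift : ∫ s in Ioo 0 (T - a), U (T - a - s) (B (u (s + a)))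
      = ∫ s in Ioo a T, U (T - s) (B (u s)) := by
    rw [setIntegral_Ioo_eq_intervalIntegral (sub_nonneg.2 haT),
      setIntegral_Ioo_eq_intervalIntegral haT]
    simpa [sub_sub, add_comm a] using
      intervalIntegral.integral_comp_add_right (fun s => U (T - s) (B (u s))) a
        (a := 0) (b := T - a)
  have hsplit : ∫ s in Ioo 0 T, U (T - s) (B (u s))
      = (∫ s in Ioo 0 a, U (T - s) (B (u s))) + ∫ s in Ioo a T, U (T - s) (B (u s)) := by
    rw [setIntegral_Ioo_eq_intervalIntegral ha, setIntegral_Ioo_eq_intervalIntegral haT,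
      setIntegral_Ioo_eq_intervalIntegral (ha.trans haT),
      intervalIntegral.integral_add_adjacent_intervals]
    · exact (intervalIntegrable_iff_integrableOn_Ioo_of_le ha).2
        (hK.mono_set (Ioo_subset_Ioo_right haT))
    · exact (intervalIntegrable_iff_integrableOn_Ioo_of_le haT).2
        (hK.mono_set (Ioo_subset_Ioo_left ha))
  simp only [stateT, map_add, ← hU.apply_add, sub_add_cancel, hpull, hshift, hsplit, add_assoc]

end State

section OptimalControl

variable {U : ℝ → E →L[ℂ] E} {B : E →L[ℂ] E} {y : E}

theorem Mmin_nonneg (U : ℝ → E →L[ℂ] E) (B : E →L[ℂ] E) (y : E) (T : ℝ) :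
    0 ≤ Mmin U B y T :=
  Real.sInf_nonneg (forall_mem_image.2 fun v _ => supNorm_nonneg v 0 T)

theorem Mmin_le {v : ℝ → E} {T : ℝ} (hv : v ∈ VTset U B y T) :
    Mmin U B y T ≤ supNorm v 0 T :=
  csInf_le ⟨0, forall_mem_image.2 fun v _ => supNorm_nonneg v 0 T⟩ (mem_image_of_mem _ hv)

theorem le_Mmin {m T : ℝ} (hne : (VTset U B y T).Nonempty)
    (h : ∀ v ∈ VTset U B y T, m ≤ supNorm v 0 T) : m ≤ Mmin U B y T :=
  le_csInf (hne.image _) (forall_mem_image.2 h)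

theorem Tmin_le {u : ℝ → E} {M s : ℝ} (hs : 0 < s) (hu : u ∈ UMset U B y M)
    (h0 : stateT U B s 0 u y = 0) : Tmin U B y M ≤ s :=
  csInf_le ⟨0, fun _ h => h.1.le⟩ ⟨hs, u, hu, h0⟩

theorem Mmin_pos (hU : IsUnitaryGroup U) (hB : IsOrthProj B) {T : ℝ} (hy : y ≠ 0)
    (hT : 0 < T) (hne : (VTset U B y T).Nonempty) : 0 < Mmin U B y T := by
  refine (div_pos (norm_pos_iff.2 hy) hT).trans_le (le_Mmin hne fun v hv => ?_)
  rw [div_le_iff₀ hT]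
  calc ‖y‖ = ‖stateT U B T 0 v y - U T y‖ := by rw [hv.2, zero_sub, norm_neg, hU.norm_apply]
    _ ≤ supNorm v 0 T * T := norm_stateT_sub_le hU hB hT.le (ae_norm_le_supNorm hv.1) y

theorem indicator_mem_VTset {u : ℝ → E} {M s : ℝ} (hu : u ∈ UMset U B y M)
    (h0 : stateT U B s 0 u y = 0) : (Ioo 0 s).indicator u ∈ VTset U B y s :=
  ⟨⟨hu.1.1.indicator measurableSet_Ioo, M,
      hu.2.1.mono fun t ht hts => by rw [indicator_of_mem hts]; exact ht hts.1⟩,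
    (stateT_indicator u s 0 y).trans h0⟩

theorem indicator_mem_UMset {f : ℝ → E} {M s : ℝ} (hf : AEStronglyMeasurable f) (hM : 0 ≤ M)
    (hfM : ∀ᵐ t : ℝ, t ∈ Ioo 0 s → ‖f t‖ ≤ M) (hs : 0 < s) (h0 : stateT U B s 0 f y = 0) :
    (Ioo 0 s).indicator f ∈ UMset U B y M :=
  have hbound := ae_norm_indicator_le (t := Ioi 0) hM hfM
  ⟨⟨hf.indicator measurableSet_Ioo, M, hbound⟩, hbound, s, hs, (stateT_indicator f s 0 y).trans h0⟩

theorem stateT_add_initial (u : ℝ → E) (T τ : ℝ) (y z : E) :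
    stateT U B T τ u (y + z) = stateT U B T τ u y + U T z := by
  simp only [stateT, map_add, add_right_comm]

variable [CompleteSpace E]

theorem stateT_indicator_Ioo_of_le (hU : IsUnitaryGroup U) (hB : IsOrthProj B) {c : ℝ → E}
    {τ t : ℝ} (hc : MemLinfty c 0 τ) (hτ : 0 ≤ τ) (hτt : τ ≤ t) (y : E) :
    stateT U B t 0 ((Ioo 0 τ).indicator c) y = U (t - τ) (stateT U B τ 0 c y) := by
  rw [stateT_eq_stateT_comp_add hU hB (hc.indicator_Ioo 0 t) hτ hτt, stateT_indicator,
    stateT_congr (v := 0) (fun s hs => indicator_of_notMem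
      (fun h => lt_asymm (lt_add_of_pos_left τ hs.1) h.2) _), stateT_zero]

theorem norm_stateT_le_of_stateT_eq_zero (hU : IsUnitaryGroup U) (hB : IsOrthProj B)
    {v : ℝ → E} {S δ c : ℝ} (hv : MemLinfty v 0 S) (hc : ∀ᵐ t : ℝ, t ∈ Ioo 0 S → ‖v t‖ ≤ c)
    (hδ : 0 ≤ δ) (hδS : δ ≤ S) (h0 : stateT U B S 0 v y = 0) :
    ‖stateT U B (S - δ) 0 v y‖ ≤ c * δ := by
  set z := stateT U B (S - δ) 0 v y
  have hflow := stateT_eq_stateT_comp_add hU hB hv (sub_nonneg.2 hδS) (sub_le_self S hδ) y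
  rw [sub_sub_cancel, h0] at hflow
  have hshift : ∀ᵐ t : ℝ, t ∈ Ioo 0 δ → ‖v (t + (S - δ))‖ ≤ c := by
    filter_upwards [(measurePreserving_add_right volume (S - δ)).quasiMeasurePreserving.ae hc]
      with t ht htδ
    exact ht ⟨by linarith [htδ.1], by linarith [htδ.2]⟩
  calc ‖z‖ = ‖stateT U B δ 0 (fun t => v (t + (S - δ))) z - U δ z‖ := by
        rw [← hflow, zero_sub, norm_neg, hU.norm_apply]
    _ ≤ c * δ := norm_stateT_sub_le hU hB hδ hshift z

/-- Stop `v` at `S - δ`, where the state is `O(δ)`, and cancel that state by adding a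
correction of norm `O(δ)` supported in `(0, S/2)`, given by (EC) for the time `S/2`. -/
theorem exists_stateT_eq_zero_lt_of_supNorm_lt (hU : IsUnitaryGroup U) (hB : IsOrthProj B)
    (hEC : EC U B) {v : ℝ → E} {S M : ℝ} (hS : 0 < S) (hv : v ∈ VTset U B y S)
    (hvM : supNorm v 0 S < M) :
    ∃ s, 0 < s ∧ s < S ∧ ∃ u ∈ UMset U B y M, stateT U B s 0 u y = 0 := by
  set M' := supNorm v 0 S
  have hvb := ae_norm_le_supNorm hv.1
  obtain ⟨C, hC, hctrl⟩ := hEC (S / 2) (half_pos hS)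
  obtain ⟨δ₀, hδ₀, hCδ₀⟩ := exists_pos_mul_lt (sub_pos.2 hvM) (C * M')
  set δ := min δ₀ (S / 2)
  have hδ : 0 < δ := lt_min hδ₀ (half_pos hS)
  have hδS : δ ≤ S / 2 := min_le_right _ _
  set z := stateT U B (S - δ) 0 v y
  have hz : C * ‖z‖ ≤ M - M' := calc
    C * ‖z‖ ≤ C * (M' * δ) := mul_le_mul_of_nonneg_left
        (norm_stateT_le_of_stateT_eq_zero hU hB hv.1 hvb hδ.le (by linarith) hv.2) hC.le
    _ ≤ C * M' * δ₀ := by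
        rw [← mul_assoc]
        exact mul_le_mul_of_nonneg_left (min_le_left _ _)
          (mul_nonneg hC.le (supNorm_nonneg v 0 S))
    _ ≤ M - M' := hCδ₀.le
  obtain ⟨c, hcm, hcb, hcs⟩ := hctrl 0 (U (-(S - δ - S / 2)) (-z))
  have hcM : ∀ᵐ t : ℝ, t ∈ Ioo 0 (S / 2) → ‖c t‖ ≤ M - M' := hcb.mono fun t ht hts =>
    (ht hts).trans (by rwa [map_zero, sub_zero, hU.norm_apply, norm_neg])
  have hc : MemLinfty c 0 (S / 2) := ⟨hcm, _, hcM⟩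
  set f := v + (Ioo 0 (S / 2)).indicator c
  have hf0 : stateT U B (S - δ) 0 f y = 0 := by
    have hadd := stateT_add hU hB (hv.1.mono (Ioo_subset_Ioo_right (by linarith)))
      (hc.indicator_Ioo 0 (S - δ)) y 0
    rw [add_zero] at hadd
    rw [hadd, stateT_indicator_Ioo_of_le hU hB hc (half_pos hS).le (by linarith), hcs,
      hU.apply_apply_neg, add_neg_cancel]
  have hfM : ∀ᵐ t : ℝ, t ∈ Ioo 0 (S - δ) → ‖f t‖ ≤ M := by
    filter_upwards [hvb, ae_norm_indicator_le (t := Ioo 0 (S - δ)) (sub_nonneg.2 hvM.le) hcM]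
      with t hvt hct hts
    calc ‖f t‖ ≤ ‖v t‖ + ‖(Ioo 0 (S / 2)).indicator c t‖ := norm_add_le _ _
      _ ≤ M' + (M - M') := add_le_add (hvt ⟨hts.1, by linarith [hts.2]⟩) (hct hts)
      _ = M := add_sub_cancel _ _
  have hs : 0 < S - δ := by linarith
  exact ⟨S - δ, hs, by linarith, _, indicator_mem_UMset (hv.1.1.add (hcm.indicator
    measurableSet_Ioo)) (hvM.le.trans' (supNorm_nonneg v 0 S)) hfM hs hf0,
    (stateT_indicator f _ 0 y).trans hf0⟩

/-- Run `l • u` on `(0, S)`, which leaves the state `(1 - l) • U S y`, then steer this to `0`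
on `(S, T)` by (EC); `l` is chosen to balance the two bounds `l * M` and `C (1 - l) ‖y‖`. -/
theorem exists_mem_VTset_supNorm_lt (hU : IsUnitaryGroup U) (hB : IsOrthProj B)
    (hEC : EC U B) {u : ℝ → E} {S T M : ℝ} (hM : 0 < M) (hS : 0 < S)
    (hST : S < T) (hu : u ∈ UMset U B y M) (h0 : stateT U B S 0 u y = 0) :
    ∃ w ∈ VTset U B y T, supNorm w 0 T < M := by
  obtain ⟨C, hC, hctrl⟩ := hEC (T - S) (sub_pos.2 hST)
  set l := C * ‖y‖ / (M + C * ‖y‖)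
  have hl0 : 0 ≤ l := by positivity
  have hl1 : l < 1 := (div_lt_one (by positivity)).2 (by linarith)
  have hlM : (1 - l) * (C * ‖y‖) = l * M := by
    simp only [l]
    field_simp
    ring
  have hmid : stateT U B S 0 ((l : ℂ) • u) y = ((1 - l : ℝ) : ℂ) • U S y := by
    have hy' : y = (l : ℂ) • y + ((1 - l : ℝ) : ℂ) • y := by
      rw [← add_smul, ← Complex.ofReal_add, add_sub_cancel, Complex.ofReal_one, one_smul]
    rw [hy', stateT_add_initial, stateT_smul, ← hy', h0, smul_zero, zero_add, map_smul]
  obtain ⟨c, hcm, hcb, hcs⟩ := hctrl (((1 - l : ℝ) : ℂ) • U S y) 0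
  have hcM : ∀ᵐ t : ℝ, t ∈ Ioo 0 (T - S) → ‖c t‖ ≤ l * M := by
    refine hcb.mono fun t ht hts => (ht hts).trans_eq ?_
    rw [zero_sub, norm_neg, hU.norm_apply, norm_smul, hU.norm_apply, Complex.norm_real,
      Real.norm_of_nonneg (sub_nonneg.2 hl1.le), ← hlM]
    ring
  set w := (Ioo 0 S).indicator ((l : ℂ) • u) + (Ioo S T).indicator fun t => c (t - S)
  have hw₁ : EqOn w ((l : ℂ) • u) (Ioo 0 S) := fun t ht => by
    simp [w, indicator_of_mem ht, indicator_of_notMem fun h : t ∈ Ioo S T => lt_asymm ht.2 h.1]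
  have hw₂ : EqOn (fun t => w (t + S)) c (Ioo 0 (T - S)) := fun t ht => by
    have hS' : t + S ∈ Ioo S T := ⟨lt_add_of_pos_left S ht.1, by linarith [ht.2]⟩
    simp [w, indicator_of_mem hS',
      indicator_of_notMem fun h : t + S ∈ Ioo 0 S => lt_asymm hS'.1 h.2]
  have hwM : ∀ᵐ t : ℝ, t ∈ Ioo 0 T → ‖w t‖ ≤ l * M := by
    have hlu : ∀ᵐ t : ℝ, t ∈ Ioo 0 S → ‖((l : ℂ) • u) t‖ ≤ l * M := hu.2.1.mono fun t ht hts => by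
      rw [Pi.smul_apply, norm_smul, Complex.norm_real, Real.norm_of_nonneg hl0]
      exact mul_le_mul_of_nonneg_left (ht hts.1) hl0
    have hcS : ∀ᵐ t : ℝ, t ∈ Ioo S T → ‖c (t - S)‖ ≤ l * M := by
      filter_upwards [(measurePreserving_sub_right volume S).quasiMeasurePreserving.ae hcM]
        with t ht hts
      exact ht ⟨sub_pos.2 hts.1, sub_lt_sub_right hts.2 S⟩
    filter_upwards [hlu, ae_norm_indicator_le (t := Ioo 0 T) (by positivity) hcS]
      with t h₁ h₂ ht
    by_cases htS : t ∈ Ioo 0 S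
    · rw [hw₁ htS]; exact h₁ htS
    · simpa [w, indicator_of_notMem htS] using h₂ ht
  have hwL : MemLinfty w 0 T := ⟨((hu.1.1.const_smul _).indicator measurableSet_Ioo).add
    ((hcm.comp_quasiMeasurePreserving
      (measurePreserving_sub_right volume S).quasiMeasurePreserving).indicator measurableSet_Ioo),
    _, hwM⟩
  have hw0 : stateT U B T 0 w y = 0 := by
    rw [stateT_eq_stateT_comp_add hU hB hwL hS.le hST.le, stateT_congr hw₁, hmid,
      stateT_congr hw₂, hcs]
  exact ⟨w, ⟨hwL, hw0⟩, (supNorm_le (by positivity) hwM).trans_lt (mul_lt_of_lt_one_left hM hl1)⟩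

theorem supNorm_indicator_Tmin_eq_Mmin (hU : IsUnitaryGroup U) (hB : IsOrthProj B)
    (hEC : EC U B) (hBB : BB U B) {M : ℝ} (hy : y ≠ 0) (hM : 0 < M) {u : ℝ → E}
    (hu : u ∈ UMset U B y M) (h0 : stateT U B (Tmin U B y M) 0 u y = 0) :
    supNorm ((Ioo 0 (Tmin U B y M)).indicator u) 0 (Tmin U B y M) =
      Mmin U B y (Tmin U B y M) := by
  have hT : 0 < Tmin U B y M := pos_of_stateT_eq_zero hU hy h0
  have hsup : supNorm ((Ioo 0 (Tmin U B y M)).indicator u) 0 (Tmin U B y M) = M :=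
    supNorm_eq_of_ae_norm_eq hT hM.le ((hBB y hy M hM u hu h0).mono fun t ht hts => by
      rw [indicator_of_mem hts]; exact ht hts)
  have hmem := indicator_mem_VTset hu h0
  refine hsup.trans (le_antisymm ?_ ((Mmin_le hmem).trans_eq hsup))
  refine le_Mmin ⟨_, hmem⟩ fun v hv => not_lt.1 fun hvM => ?_
  obtain ⟨s, hs, hsT, u', hu', hu'0⟩ := exists_stateT_eq_zero_lt_of_supNorm_lt hU hB hEC hT hv hvM
  exact (Tmin_le hs hu' hu'0).not_gt hsT

theorem Tmin_Mmin_eq (hU : IsUnitaryGroup U) (hB : IsOrthProj B) (hEC : EC U B) (hET : ET U B)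
    {T : ℝ} (hy : y ≠ 0) (hT : 0 < T) {v : ℝ → E} (hv : v ∈ VTset U B y T)
    (hvopt : supNorm v 0 T = Mmin U B y T) : Tmin U B y (Mmin U B y T) = T := by
  have hext := indicator_mem_UMset hv.1.1 (Mmin_nonneg U B y T)
    (hvopt ▸ ae_norm_le_supNorm hv.1) hT hv.2
  refine le_antisymm (Tmin_le hT hext ((stateT_indicator v T 0 y).trans hv.2))
    (not_lt.1 fun hlt => ?_)
  have hM := Mmin_pos hU hB hy hT ⟨v, hv⟩
  obtain ⟨u, hu, hu0⟩ := hET y hy _ hM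
  obtain ⟨w, hw, hwM⟩ := exists_mem_VTset_supNorm_lt hU hB hEC hM
    (pos_of_stateT_eq_zero hU hy hu0) hlt hu hu0
  exact (Mmin_le hw).not_gt hwM

end OptimalControl

theorem tocp_nocp_equivalence_general
    (U : ℝ → H →L[ℂ] H) (B : H →L[ℂ] H) (hU : IsUnitaryGroup U) (hB : IsOrthProj B)
    (hEC : EC U B) (hBB : BB U B) (hET : ET U B)
    (y₀ : H) (hy₀ : y₀ ≠ 0) (M T : ℝ) (hM : 0 < M) (hT : 0 < T) :
    (∀ u : ℝ → H, u ∈ UMset U B y₀ M → stateT U B (Tmin U B y₀ M) 0 u y₀ = 0 →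
      (Ioo (0 : ℝ) (Tmin U B y₀ M)).indicator u ∈ VTset U B y₀ (Tmin U B y₀ M) ∧
      supNorm ((Ioo (0 : ℝ) (Tmin U B y₀ M)).indicator u) 0 (Tmin U B y₀ M) =
        Mmin U B y₀ (Tmin U B y₀ M)) ∧
    (∀ v : ℝ → H, v ∈ VTset U B y₀ T → supNorm v 0 T = Mmin U B y₀ T →
      (Ioo (0 : ℝ) T).indicator v ∈ UMset U B y₀ (Mmin U B y₀ T) ∧
      stateT U B (Tmin U B y₀ (Mmin U B y₀ T)) 0 ((Ioo (0 : ℝ) T).indicator v) y₀ = 0) := by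
  refine ⟨fun u hu hu0 => ⟨indicator_mem_VTset hu hu0,
    supNorm_indicator_Tmin_eq_Mmin hU hB hEC hBB hy₀ hM hu hu0⟩, fun v hv hvopt => ⟨?_, ?_⟩⟩
  · exact indicator_mem_UMset hv.1.1 (Mmin_nonneg U B y₀ T) (hvopt ▸ ae_norm_le_supNorm hv.1)
      hT hv.2
  · rw [Tmin_Mmin_eq hU hB hEC hET hy₀ hT hv hvopt, stateT_indicator]
    exact hv.2

theorem tocp_nocp_equivalence
    (U : ℝ → H →L[ℂ] H) (B : H →L[ℂ] H) (hU : IsUnitaryGroup U) (hB : IsOrthProj B)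
    (hEC : EC U B) (hECrev : EC (fun t => U (-t)) B)
    (hBB : BB U B) (hBBrev : BB (fun t => U (-t)) B)
    (hET : ET U B) (hETrev : ET (fun t => U (-t)) B)
    (y₀ : H) (hy₀ : y₀ ≠ 0) (M T : ℝ) (hM : 0 < M) (hT : 0 < T) :
    (∀ u : ℝ → H, u ∈ UMset U B y₀ M → stateT U B (Tmin U B y₀ M) 0 u y₀ = 0 →
      (Ioo (0 : ℝ) (Tmin U B y₀ M)).indicator u ∈ VTset U B y₀ (Tmin U B y₀ M) ∧
      supNorm ((Ioo (0 : ℝ) (Tmin U B y₀ M)).indicator u) 0 (Tmin U B y₀ M) =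
        Mmin U B y₀ (Tmin U B y₀ M)) ∧
    (∀ v : ℝ → H, v ∈ VTset U B y₀ T → supNorm v 0 T = Mmin U B y₀ T →
      (Ioo (0 : ℝ) T).indicator v ∈ UMset U B y₀ (Mmin U B y₀ T) ∧
      stateT U B (Tmin U B y₀ (Mmin U B y₀ T)) 0 ((Ioo (0 : ℝ) T).indicator v) y₀ = 0) :=
  tocp_nocp_equivalence_general U B hU hB hEC hBB hET y₀ hy₀ M T hM hT
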